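/- arXiv:1705.02303 — 4 statements merged into one kernel-verified Lean document; each statement's English description precedes it below -/
import Mathlib

section
/- Orthogonal eigendirections give full covert rate (Theorem 3, case θ = π/2; null-steering example): Let N_a ≥ 1 and n ≥ 1 be integers, σ_b, σ_w, λ_b, λ_w, P > 0 real numbers and δ ≥ 0, and let u_b, u_w ∈ ℂ^{N_a} be unit vectors with ⟨u_w, u_b⟩ = 0. Let W_b := λ_b • (outer product of u_b with itself) and W_w := λ_w • (outer product of u_w with itself). Then the covariance Q₀ := P • (outer product of u_b with itself) satisfies W_w * Q₀ = 0 and D(W_w, Q₀) = 0, and sSup { R(Q) : Q an N_a×N_a complex Hermitian positive semidefinite matrix with (Q.trace).re ≤ P and n·D(W_w, Q) ≤ 2δ² } = Real.log(1 + λ_b·P/σ_b²). -/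
/-!
Since `u_wᴴ u_b = 0`, the product `W_w Q₀` vanishes, so `1 + σ_w⁻² W_w Q₀ = 1` and the detection
functional is zero at `Q₀`. For any `Q`, the matrix determinant lemma turns the rate into
`log (1 + λ_b (u_bᴴ Q u_b) / σ_b²)`. Writing a positive semidefinite `Q` as a sum of rank-one
matrices `v vᴴ`, Cauchy–Schwarz bounds each `|vᴴ u_b|²` by `‖v‖² = tr (v vᴴ)`, so
`u_bᴴ Q u_b ≤ tr Q ≤ P`, and this bound is attained by `Q₀`.
-/

open Matrix
open scoped ComplexOrder InnerProductSpace

/-- The detection (relative-entropy) functional at Willie: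
`D(W, Q) = log (det (1 + σ_w⁻² W Q)).re + ((1 + σ_w⁻² W Q)⁻¹.trace).re − N_a`. -/
noncomputable def Dfun {Na : ℕ} (σw : ℝ) (W Q : Matrix (Fin Na) (Fin Na) ℂ) : ℝ :=
  Real.log ((1 + (σw ^ 2)⁻¹ • (W * Q)).det.re)
    + (((1 + (σw ^ 2)⁻¹ • (W * Q))⁻¹).trace).re - Na

/-- The rate functional for Bob's channel: `R(Q) = log (det (1 + σ_b⁻² W_b Q)).re`. -/
noncomputable def Rfun {Na : ℕ} (σb : ℝ) (Wb Q : Matrix (Fin Na) (Fin Na) ℂ) : ℝ :=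
  Real.log ((1 + (σb ^ 2)⁻¹ • (Wb * Q)).det.re)

/-- The outer product `u uᴴ` of a vector with itself, with `(i,j)` entry `u i * conj (u j)`. -/
noncomputable def outer {Na : ℕ} (u : EuclideanSpace ℂ (Fin Na)) :
    Matrix (Fin Na) (Fin Na) ℂ :=
  Matrix.of fun i j => u i * star (u j)

open RCLike in
theorem Matrix.PosSemidef.re_dotProduct_mulVec_le_trace {𝕜 n : Type*} [RCLike 𝕜] [Fintype n]
    {Q : Matrix n n 𝕜} (hQ : Q.PosSemidef) (u : EuclideanSpace 𝕜 n) :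
    re (star (u : n → 𝕜) ⬝ᵥ Q *ᵥ u) ≤ ‖u‖ ^ 2 * re Q.trace := by
  obtain ⟨m, v, rfl⟩ := posSemidef_iff_eq_sum_vecMulVec.mp hQ
  simp only [sum_mulVec, dotProduct_sum, trace_sum, map_sum, Finset.mul_sum]
  refine Finset.sum_le_sum fun i _ => ?_
  set w : EuclideanSpace 𝕜 n := WithLp.toLp 2 (v i)
  have hnorm : re (v i ⬝ᵥ star (v i)) = ‖w‖ ^ 2 := by
    rw [← inner_self_eq_norm_sq (𝕜 := 𝕜), EuclideanSpace.inner_eq_star_dotProduct]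
  have hquad : star (u : n → 𝕜) ⬝ᵥ vecMulVec (v i) (star (v i)) *ᵥ u = ‖⟪w, u⟫_𝕜‖ ^ 2 := by
    rw [vecMulVec_mulVec, dotProduct_smul, op_smul_eq_mul, star_dotProduct, ← RCLike.conj_mul,
      EuclideanSpace.inner_eq_star_dotProduct, dotProduct_comm]
    rfl
  rw [hquad, trace_vecMulVec, hnorm, ← ofReal_pow, ofReal_re, mul_comm (‖u‖ ^ 2), ← mul_pow]
  gcongr
  exact norm_inner_le_norm w u

theorem Matrix.det_one_add_vecMulVec {m R : Type*} [Fintype m] [DecidableEq m] [CommRing R]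
    (u v : m → R) : det (1 + vecMulVec u v) = 1 + v ⬝ᵥ u := by
  rw [vecMulVec_eq Unit, det_one_add_replicateCol_mul_replicateRow]

section Outer

variable {Na : ℕ}

theorem outer_eq_vecMulVec (u : EuclideanSpace ℂ (Fin Na)) : outer u = vecMulVec u (star u) :=
  rfl

theorem outer_posSemidef (u : EuclideanSpace ℂ (Fin Na)) : (outer u).PosSemidef :=
  posSemidef_vecMulVec_self_star _

theorem outer_mul_outer_of_inner_eq_zero {u v : EuclideanSpace ℂ (Fin Na)} (h : ⟪u, v⟫_ℂ = 0) :
    outer u * outer v = 0 := by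
  rw [EuclideanSpace.inner_eq_star_dotProduct, dotProduct_comm] at h
  simp [outer_eq_vecMulVec, vecMulVec_mul_vecMulVec, h]

theorem star_dotProduct_self_of_norm_eq_one {u : EuclideanSpace ℂ (Fin Na)} (hu : ‖u‖ = 1) :
    star (u : Fin Na → ℂ) ⬝ᵥ u = 1 := by
  rw [dotProduct_comm, ← EuclideanSpace.inner_eq_star_dotProduct, inner_self_eq_norm_sq_to_K, hu]
  simp

theorem trace_outer {u : EuclideanSpace ℂ (Fin Na)} (hu : ‖u‖ = 1) : (outer u).trace = 1 := by
  rw [outer_eq_vecMulVec, trace_vecMulVec, dotProduct_comm, star_dotProduct_self_of_norm_eq_one hu]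

theorem star_dotProduct_outer_mulVec {u : EuclideanSpace ℂ (Fin Na)} (hu : ‖u‖ = 1) :
    star (u : Fin Na → ℂ) ⬝ᵥ outer u *ᵥ u = 1 := by
  rw [outer_eq_vecMulVec, vecMulVec_mulVec, dotProduct_smul, op_smul_eq_mul,
    star_dotProduct_self_of_norm_eq_one hu, one_mul]

theorem Dfun_eq_zero_of_mul_eq_zero (σw : ℝ) {W Q : Matrix (Fin Na) (Fin Na) ℂ} (h : W * Q = 0) :
    Dfun σw W Q = 0 := by
  simp [Dfun, h]

theorem Rfun_smul_outer (σb lb : ℝ) (u : EuclideanSpace ℂ (Fin Na))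
    (Q : Matrix (Fin Na) (Fin Na) ℂ) :
    Rfun σb ((lb : ℂ) • outer u) Q
      = Real.log (1 + lb / σb ^ 2 * (star (u : Fin Na → ℂ) ⬝ᵥ Q *ᵥ u).re) := by
  have h : (σb ^ 2)⁻¹ • ((lb : ℂ) • outer u * Q)
      = vecMulVec (((lb / σb ^ 2 : ℝ) : ℂ) • (u : Fin Na → ℂ)) (star (u : Fin Na → ℂ) ᵥ* Q) := by
    rw [smul_mul_assoc, outer_eq_vecMulVec, vecMulVec_mul, smul_vecMulVec, ← smul_assoc,
      Complex.real_smul]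
    congr 1
    push_cast
    ring
  rw [Rfun, h, det_one_add_vecMulVec, dotProduct_smul, ← dotProduct_mulVec, smul_eq_mul,
    Complex.add_re, Complex.one_re, Complex.re_ofReal_mul]

theorem Rfun_smul_outer_le {σb lb P : ℝ} (hlb : 0 ≤ lb) {u : EuclideanSpace ℂ (Fin Na)}
    (hu : ‖u‖ = 1) {Q : Matrix (Fin Na) (Fin Na) ℂ} (hQ : Q.PosSemidef) (htr : Q.trace.re ≤ P) :
    Rfun σb ((lb : ℂ) • outer u) Q ≤ Real.log (1 + lb * P / σb ^ 2) := by
  have hquad : (star (u : Fin Na → ℂ) ⬝ᵥ Q *ᵥ u).re ≤ P := by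
    have h := hQ.re_dotProduct_mulVec_le_trace u
    rw [hu, one_pow, one_mul] at h
    exact h.trans htr
  rw [Rfun_smul_outer, mul_div_right_comm]
  have hquad_nonneg := hQ.re_dotProduct_nonneg (u : Fin Na → ℂ)
  gcongr

theorem Rfun_smul_outer_smul_outer (σb lb P : ℝ) {u : EuclideanSpace ℂ (Fin Na)}
    (hu : ‖u‖ = 1) :
    Rfun σb ((lb : ℂ) • outer u) ((P : ℂ) • outer u) = Real.log (1 + lb * P / σb ^ 2) := by
  rw [Rfun_smul_outer, smul_mulVec, dotProduct_smul, star_dotProduct_outer_mulVec hu,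
    smul_eq_mul, mul_one, Complex.ofReal_re, mul_div_right_comm]

end Outer

theorem orthogonal_full_covert_rate_general (Na n : ℕ)
    (σb σw lb lw P δ : ℝ) (hlb : 0 < lb) (hP : 0 < P)
    (ub uw : EuclideanSpace ℂ (Fin Na)) (hub : ‖ub‖ = 1)
    (horth : ⟪uw, ub⟫_ℂ = 0) :
    ((lw : ℂ) • outer uw) * ((P : ℂ) • outer ub) = 0 ∧
    Dfun σw ((lw : ℂ) • outer uw) ((P : ℂ) • outer ub) = 0 ∧
    sSup {r : ℝ | ∃ Q : Matrix (Fin Na) (Fin Na) ℂ, Q.PosSemidef ∧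
        (Q.trace).re ≤ P ∧
        (n : ℝ) * Dfun σw ((lw : ℂ) • outer uw) Q ≤ 2 * δ ^ 2 ∧
        r = Rfun σb ((lb : ℂ) • outer ub) Q}
      = Real.log (1 + lb * P / σb ^ 2) := by
  have hWQ : ((lw : ℂ) • outer uw) * ((P : ℂ) • outer ub) = 0 := by
    rw [smul_mul_smul_comm, outer_mul_outer_of_inner_eq_zero horth, smul_zero]
  have hD : Dfun σw ((lw : ℂ) • outer uw) ((P : ℂ) • outer ub) = 0 :=
    Dfun_eq_zero_of_mul_eq_zero σw hWQ
  refine ⟨hWQ, hD, IsGreatest.csSup_eq ⟨⟨(P : ℂ) • outer ub, ?_, ?_, ?_, ?_⟩, ?_⟩⟩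
  · exact (outer_posSemidef ub).smul (by exact_mod_cast hP.le)
  · simp [trace_smul, trace_outer hub]
  · rw [hD, mul_zero]
    positivity
  · exact (Rfun_smul_outer_smul_outer σb lb P hub).symm
  · rintro _ ⟨Q, hQ, htr, -, rfl⟩
    exact Rfun_smul_outer_le hlb.le hub hQ htr

/-- **Orthogonal eigendirections give full covert rate (Theorem 3, case θ = π/2).**
If `⟨u_w, u_b⟩ = 0`, then the full-power covariance `Q₀ = P u_b u_bᴴ` satisfies
`W_w Q₀ = 0` and `D(W_w, Q₀) = 0`, and the `δ`-PD constrained capacity equals the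
unconstrained capacity `log(1 + λ_b·P/σ_b²)`. -/
theorem orthogonal_full_covert_rate (Na n : ℕ) (hNa : 1 ≤ Na) (hn : 1 ≤ n)
    (σb σw lb lw P δ : ℝ) (hσb : 0 < σb) (hσw : 0 < σw) (hlb : 0 < lb) (hlw : 0 < lw)
    (hP : 0 < P) (hδ : 0 ≤ δ)
    (ub uw : EuclideanSpace ℂ (Fin Na)) (hub : ‖ub‖ = 1) (huw : ‖uw‖ = 1)
    (horth : ⟪uw, ub⟫_ℂ = 0) :
    ((lw : ℂ) • outer uw) * ((P : ℂ) • outer ub) = 0 ∧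
    Dfun σw ((lw : ℂ) • outer uw) ((P : ℂ) • outer ub) = 0 ∧
    sSup {r : ℝ | ∃ Q : Matrix (Fin Na) (Fin Na) ℂ, Q.PosSemidef ∧
        (Q.trace).re ≤ P ∧
        (n : ℝ) * Dfun σw ((lw : ℂ) • outer uw) Q ≤ 2 * δ ^ 2 ∧
        r = Rfun σb ((lb : ℂ) • outer ub) Q}
      = Real.log (1 + lb * P / σb ^ 2) :=
  orthogonal_full_covert_rate_general Na n σb σw lb lw P δ hlb hP ub uw hub horth
end

section
/- Covert rate without shared secret, achievability (Theorem 6, lower bound): Let N_a ≥ 1 and n ≥ 1 be integers, σ_b, σ_w, γ_w, δ, P > 0 real numbers, and let W_b be an N_a×N_a complex Hermitian positive semidefinite matrix of rank N whose nonzero eigenvalues are λ_1, …, λ_N > 0. Assume 2·N·σ_w²·δ²/(γ_w·n·N_a) ≤ P. Define Ĉ_pd(δ) := sSup { R(Q) : Q an N_a×N_a complex Hermitian positive semidefinite matrix with (Q.trace).re ≤ P and Real.log((det(1 + (γ_w/σ_w²) • Q)).re) ≤ 2δ²/n }. Then Ĉ_pd(δ) ≥ Σ_{i=1}^{N} Real.log(1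 + 2·σ_w²·δ²·λ_i/(σ_b²·γ_w·n·N_a)). -/
open Matrix
open scoped ComplexOrder

open scoped MatrixOrder

namespace Matrix

variable {𝕜 : Type*} [RCLike 𝕜] {n : Type*} [Fintype n]

lemma PosSemidef.re_apply_self_le_re_trace {A : Matrix n n 𝕜} (hA : A.PosSemidef) (i : n) :
    RCLike.re (A i i) ≤ RCLike.re A.trace := by
  rw [trace, map_sum]
  exact Finset.single_le_sum (f := fun j => RCLike.re (A j j))
    (fun j _ => (RCLike.nonneg_iff.mp hA.diag_nonneg).1) (Finset.mem_univ i)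

/-- The `2 × 2` principal minor on `{i, j}` gives `‖A i j‖² ≤ A i i * A j j`. -/
lemma PosSemidef.norm_apply_le_re_trace {A : Matrix n n 𝕜} (hA : A.PosSemidef) (i j : n) :
    ‖A i j‖ ≤ RCLike.re A.trace := by
  have hdet := (hA.submatrix ![i, j]).det_nonneg
  simp only [det_fin_two, submatrix_apply, cons_val_zero, cons_val_one] at hdet
  rw [← hA.1.apply j i, RCLike.star_def, RCLike.mul_conj] at hdet
  obtain ⟨hi, hi_im⟩ := RCLike.nonneg_iff.mp (hA.diag_nonneg (i := i))
  obtain ⟨hj, hj_im⟩ := RCLike.nonneg_iff.mp (hA.diag_nonneg (i := j))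
  have hre := (RCLike.nonneg_iff.mp hdet).1
  simp only [map_sub, RCLike.mul_re, hi_im, hj_im, mul_zero, sub_zero] at hre
  norm_cast at hre
  have := hA.re_apply_self_le_re_trace i
  have := hA.re_apply_self_le_re_trace j
  nlinarith [norm_nonneg (A i j)]

variable [DecidableEq n]

lemma exists_norm_det_one_add_mul_le (W : Matrix n n 𝕜) (P : ℝ) :
    ∃ C, ∀ Q : Matrix n n 𝕜, Q.PosSemidef → RCLike.re Q.trace ≤ P →
      ‖(1 + W * Q).det‖ ≤ C := by
  refine ⟨(Fintype.card n).factorial • (1 + ∑ i, ∑ k, ‖W i k‖ * P) ^ Fintype.card n,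
    fun Q hQ hP => det_le (abv := IsAbsoluteValue.toAbsoluteValue norm) fun i j => ?_⟩
  have hQP : ∀ k, ‖Q k j‖ ≤ P := fun k => (hQ.norm_apply_le_re_trace k j).trans hP
  have hP0 : 0 ≤ P := (norm_nonneg _).trans (hQP j)
  calc ‖(1 + W * Q) i j‖ ≤ ‖(1 : Matrix n n 𝕜) i j‖ + ∑ k, ‖W i k‖ * ‖Q k j‖ := by
        rw [add_apply, mul_apply]
        refine (norm_add_le _ _).trans (add_le_add le_rfl ?_)
        simpa only [norm_mul] using norm_sum_le Finset.univ fun k => W i k * Q k j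
    _ ≤ 1 + ∑ k, ‖W i k‖ * P := by
        gcongr with k
        · rw [one_apply]; split_ifs <;> simp
        · exact hQP k
    _ ≤ 1 + ∑ i, ∑ k, ‖W i k‖ * P := add_le_add le_rfl (Finset.single_le_sum
        (f := fun i => ∑ k, ‖W i k‖ * P) (fun i _ => by positivity) (Finset.mem_univ i))

lemma continuousOn_spectrum_real (A : Matrix n n 𝕜) (f : ℝ → ℝ) :
    ContinuousOn f (spectrum ℝ A) :=
  A.finite_real_spectrum.continuousOn f

/-- The orthogonal projection onto the range of a Hermitian matrix. -/
noncomputable def supportProjection (A : Matrix n n 𝕜) : Matrix n n 𝕜 :=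
  cfc (fun x : ℝ => if x = 0 then 0 else 1) A

lemma posSemidef_supportProjection (A : Matrix n n 𝕜) : A.supportProjection.PosSemidef :=
  nonneg_iff_posSemidef.mp <| cfc_nonneg fun x _ => by split_ifs <;> norm_num

namespace IsHermitian

variable {A : Matrix n n 𝕜}

lemma det_cfc (hA : A.IsHermitian) (f : ℝ → ℝ) :
    (cfc f A).det = ((∏ i, f (hA.eigenvalues i) : ℝ) : 𝕜) := by
  simp [hA.cfc_eq, IsHermitian.cfc, -Unitary.conjStarAlgAut_apply]

lemma trace_cfc (hA : A.IsHermitian) (f : ℝ → ℝ) :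
    (cfc f A).trace = ((∑ i, f (hA.eigenvalues i) : ℝ) : 𝕜) := by
  rw [hA.cfc_eq, IsHermitian.cfc, Unitary.conjStarAlgAut_apply, trace_mul_cycle,
    Unitary.coe_star_mul_self, one_mul, trace_diagonal, RCLike.ofReal_sum]
  rfl

lemma one_add_smul_cfc (hA : A.IsHermitian) (f : ℝ → ℝ) (a : ℝ) :
    1 + a • cfc f A = cfc (fun x => 1 + a * f x) A := by
  rw [cfc_add _ _ _ (A.continuousOn_spectrum_real _) (A.continuousOn_spectrum_real _),
    cfc_const_one ℝ A hA.isSelfAdjoint, cfc_const_mul _ _ _ (A.continuousOn_spectrum_real _)]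

lemma det_one_add_smul_cfc (hA : A.IsHermitian) (f : ℝ → ℝ) (a : ℝ) :
    (1 + a • cfc f A).det = ((∏ i, (1 + a * f (hA.eigenvalues i)) : ℝ) : 𝕜) := by
  rw [hA.one_add_smul_cfc, hA.det_cfc]

lemma det_one_add_smul (hA : A.IsHermitian) (a : ℝ) :
    (1 + a • A).det = ((∏ i, (1 + a * hA.eigenvalues i) : ℝ) : 𝕜) := by
  simpa only [cfc_id ℝ A hA.isSelfAdjoint, id] using hA.det_one_add_smul_cfc id a

lemma mul_supportProjection (hA : A.IsHermitian) : A * A.supportProjection = A := by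
  have h : cfc (fun x : ℝ => x * if x = 0 then 0 else 1) A = cfc id A :=
    cfc_congr fun x _ => by split_ifs with hx <;> simp [hx]
  rwa [cfc_mul _ _ _ (A.continuousOn_spectrum_real _) (A.continuousOn_spectrum_real _),
    cfc_id' ℝ A hA.isSelfAdjoint, cfc_id ℝ A hA.isSelfAdjoint] at h

lemma trace_supportProjection (hA : A.IsHermitian) :
    A.supportProjection.trace = A.rank := by
  rw [supportProjection, hA.trace_cfc, Finset.sum_ite, hA.rank_eq_card_non_zero_eigs]
  simp [Fintype.card_subtype]

lemma det_one_add_smul_supportProjection (hA : A.IsHermitian) (a : ℝ) :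
    (1 + a • A.supportProjection).det = (((1 + a) ^ A.rank : ℝ) : 𝕜) := by
  rw [supportProjection, hA.det_one_add_smul_cfc, hA.rank_eq_card_non_zero_eigs]
  simp [apply_ite, Finset.prod_ite, Fintype.card_subtype]

end IsHermitian

end Matrix

lemma Finset.sum_comp_eq_of_map_add_replicate_zero {ι κ α M : Type*} [Fintype ι] [Fintype κ]
    [Zero α] [AddCommMonoid M] {u : ι → α} {v : κ → α} {k : ℕ}
    (h : Multiset.map u Finset.univ.val + Multiset.replicate k 0 = Multiset.map v Finset.univ.val)
    {f : α → M} (hf : f 0 = 0) : ∑ i, f (u i) = ∑ j, f (v j) := by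
  simpa [Multiset.map_add, Multiset.map_replicate, hf, Multiset.map_map] using
    congrArg (fun s => (s.map f).sum) h

lemma natCast_mul_log_one_add_div_le {N m : ℕ} (hNm : N ≤ m) {x : ℝ} (hx : 0 ≤ x) :
    N * Real.log (1 + x / m) ≤ x := by
  rcases Nat.eq_zero_or_pos m with rfl | hm
  · simpa [Nat.le_zero.mp hNm] using hx
  have hlog : Real.log (1 + x / m) ≤ x / m := by
    linarith [Real.log_le_sub_one_of_pos (x := 1 + x / m) (by positivity)]
  calc (N : ℝ) * Real.log (1 + x / m) ≤ N * (x / m) := by gcongr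
    _ ≤ m * (x / m) := by gcongr
    _ = x := mul_div_cancel₀ x (by positivity)

lemma exists_Rfun_le {Na : ℕ} (σb P : ℝ) (Wb : Matrix (Fin Na) (Fin Na) ℂ) :
    ∃ C, ∀ Q : Matrix (Fin Na) (Fin Na) ℂ, Q.PosSemidef → Q.trace.re ≤ P → Rfun σb Wb Q ≤ C := by
  obtain ⟨C, hC⟩ := exists_norm_det_one_add_mul_le ((σb ^ 2)⁻¹ • Wb) P
  refine ⟨C, fun Q hQ hP => ?_⟩
  calc Rfun σb Wb Q ≤ |(1 + (σb ^ 2)⁻¹ • (Wb * Q)).det.re| := by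
        rw [Rfun, ← Real.log_abs]; exact Real.log_le_self (abs_nonneg _)
    _ ≤ ‖(1 + (σb ^ 2)⁻¹ • (Wb * Q)).det‖ := Complex.abs_re_le_norm _
    _ ≤ C := by rw [← smul_mul_assoc]; exact hC Q hQ hP

lemma Rfun_smul_supportProjection {Na : ℕ} (σb c : ℝ) (hc : 0 ≤ c)
    {Wb : Matrix (Fin Na) (Fin Na) ℂ} (hWb : Wb.PosSemidef) :
    Rfun σb Wb (c • Wb.supportProjection)
      = ∑ i, Real.log (1 + (σb ^ 2)⁻¹ * c * hWb.1.eigenvalues i) := by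
  rw [Rfun, mul_smul_comm, hWb.1.mul_supportProjection, smul_smul, hWb.1.det_one_add_smul,
    ← RCLike.re_to_complex, RCLike.ofReal_re]
  exact Real.log_prod fun i _ => by have := hWb.eigenvalues_nonneg i; positivity

theorem covert_rate_no_secret_achievability_general (Na n N : ℕ)
    (σb σw γw δ P : ℝ) (hσw : 0 < σw) (hγw : 0 < γw)
    (Wb : Matrix (Fin Na) (Fin Na) ℂ) (hWb : Wb.PosSemidef) (hrank : Wb.rank = N)
    (lam : Fin N → ℝ)
    (heig : Multiset.map lam Finset.univ.val + Multiset.replicate (Na - N) 0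
      = Multiset.map hWb.1.eigenvalues Finset.univ.val)
    (hPth : 2 * N * σw ^ 2 * δ ^ 2 / (γw * ((n : ℝ) * Na)) ≤ P) :
    ∑ i : Fin N,
        Real.log (1 + 2 * σw ^ 2 * δ ^ 2 * lam i / (σb ^ 2 * γw * ((n : ℝ) * Na)))
      ≤ sSup {r : ℝ | ∃ Q : Matrix (Fin Na) (Fin Na) ℂ, Q.PosSemidef ∧
          (Q.trace).re ≤ P ∧
          Real.log ((1 + (γw / σw ^ 2) • Q).det.re) ≤ 2 * δ ^ 2 / n ∧
          r = Rfun σb Wb Q} := by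
  set c : ℝ := 2 * σw ^ 2 * δ ^ 2 / (γw * ((n : ℝ) * Na)) with hc
  set Q : Matrix (Fin Na) (Fin Na) ℂ := c • Wb.supportProjection with hQdef
  have hc0 : 0 ≤ c := by positivity
  have hQ : Q.PosSemidef := Wb.posSemidef_supportProjection.smul hc0
  have htrace : Q.trace.re ≤ P := by
    have : Q.trace.re = c * N := by
      simp [hQdef, trace_smul, hWb.1.trace_supportProjection, hrank]
    exact this ▸ le_of_eq_of_le (by ring) hPth
  have hwillie : Real.log ((1 + (γw / σw ^ 2) • Q).det.re) ≤ 2 * δ ^ 2 / n := by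
    have hac : γw / σw ^ 2 * c = 2 * δ ^ 2 / n / Na := by rw [hc]; field_simp
    rw [hQdef, smul_smul, hWb.1.det_one_add_smul_supportProjection, hrank,
      ← RCLike.re_to_complex, RCLike.ofReal_re, Real.log_pow, hac]
    exact natCast_mul_log_one_add_div_le (hrank ▸ Wb.rank_le_width) (by positivity)
  have hrate : Rfun σb Wb Q = ∑ i : Fin N,
      Real.log (1 + 2 * σw ^ 2 * δ ^ 2 * lam i / (σb ^ 2 * γw * ((n : ℝ) * Na))) := by
    rw [hQdef, Rfun_smul_supportProjection σb c hc0 hWb,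
      ← Finset.sum_comp_eq_of_map_add_replicate_zero heig
        (f := fun x => Real.log (1 + (σb ^ 2)⁻¹ * c * x)) (by simp), hc]
    ring_nf
  obtain ⟨C, hC⟩ := exists_Rfun_le σb P Wb
  rw [← hrate]
  exact le_csSup ⟨C, by rintro r ⟨Q', hQ', hP', -, rfl⟩; exact hC Q' hQ' hP'⟩
    ⟨Q, hQ, htrace, hwillie, rfl⟩

/-- **Covert rate without shared secret, achievability (Theorem 6, lower bound).**
Without a shared secret the covertness constraint bounds Willie's channel capacity:
`log (det (1 + (γ_w/σ_w²) Q)).re ≤ 2δ²/n`.  If `W_b` is Hermitian PSD of rank `N` with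
positive eigenvalues `λ_1, …, λ_N` and `2·N·σ_w²·δ²/(γ_w·n·N_a) ≤ P`, then the corresponding
capacity `Ĉ_pd(δ)` is at least `Σ_i log(1 + 2·σ_w²·δ²·λ_i/(σ_b²·γ_w·n·N_a))`. -/
theorem covert_rate_no_secret_achievability (Na n N : ℕ) (hNa : 1 ≤ Na) (hn : 1 ≤ n)
    (σb σw γw δ P : ℝ) (hσb : 0 < σb) (hσw : 0 < σw) (hγw : 0 < γw)
    (hδ : 0 < δ) (hP : 0 < P)
    (Wb : Matrix (Fin Na) (Fin Na) ℂ) (hWb : Wb.PosSemidef) (hrank : Wb.rank = N)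
    (lam : Fin N → ℝ) (hlam : ∀ i, 0 < lam i)
    (heig : Multiset.map lam Finset.univ.val + Multiset.replicate (Na - N) 0
      = Multiset.map hWb.1.eigenvalues Finset.univ.val)
    (hPth : 2 * N * σw ^ 2 * δ ^ 2 / (γw * ((n : ℝ) * Na)) ≤ P) :
    ∑ i : Fin N,
        Real.log (1 + 2 * σw ^ 2 * δ ^ 2 * lam i / (σb ^ 2 * γw * ((n : ℝ) * Na)))
      ≤ sSup {r : ℝ | ∃ Q : Matrix (Fin Na) (Fin Na) ℂ, Q.PosSemidef ∧
          (Q.trace).re ≤ P ∧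
          Real.log ((1 + (γw / σw ^ 2) • Q).det.re) ≤ 2 * δ ^ 2 / n ∧
          r = Rfun σb Wb Q} :=
  covert_rate_no_secret_achievability_general Na n N σb σw γw δ P hσw hγw Wb hWb hrank lam heig hPth
end

section
/- Probability of achieving full covert capacity in the massive MIMO limit (Theorem 8, eq. (70), real-sphere form): There exists a universal constant K > 0 with the following property. Let N_a ≥ 2 and n ≥ 1 be integers, σ_w, λ_w, δ, P > 0 real numbers with t := √2·σ_w²·δ/(√n·λ_w·P) ∈ (0, 1), let u_b be a fixed unit vector in ℝ^{N_a}, and let u_w be distributed according to the uniform (rotation-invariant) probability measure on the unit sphere of ℝ^{N_a}. Then the probability of the event { u_w : ⟨u_b, u_w⟩² ≤ t } — the event on which, by the full-power feasibility threshold, the full-power covariance Q₀ = P·u_b u_bᵀ satisfies the covertness constraint n·D(λ_w·u_w u_wᵀ, Q₀) ≤ 2δ² — is at least 1 − K·√N_a·(1 − t)^{(N_a − 2)/2}. -/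
open Matrix MeasureTheory
open scoped InnerProductSpace

/-- The detection (relative-entropy) functional at Willie, real-matrix form:
`D(W, Q) = log det (1 + σ_w⁻² W Q) + (1 + σ_w⁻² W Q)⁻¹.trace − N_a`. -/
noncomputable def Dreal {Na : ℕ} (σw : ℝ) (W Q : Matrix (Fin Na) (Fin Na) ℝ) : ℝ :=
  Real.log ((1 + (σw ^ 2)⁻¹ • (W * Q)).det)
    + ((1 + (σw ^ 2)⁻¹ • (W * Q))⁻¹).trace - Na

/-!
On the event `⟪u_b, u_w⟫² ≤ t` the detection functional of the two rank-one matrices reduces,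
by the matrix determinant lemma and the Sherman–Morrison formula, to `log (1 + x) - x / (1 + x)`,
which is at most `x²`, and `x ≤ √2 δ / √n`.

Off a null set the complement of the event is the double cone `t ‖u‖² < ⟪u_b, u⟫²`.
Integrating the indicator of `{(u, g) | g lies in the double cone around u}` against `μ ⊗ γ`,
with `γ` the standard Gaussian, in both orders and using the rotation invariance of both measures
gives `μ (cone) = γ (cone around a coordinate axis)`. Chernoff's method bounds the latter: on that
cone `exp (-‖x‖² / 2)` is dominated by an anisotropic Gaussian density of total mass
`√N ((1 - t) / (1 - t / N)) ^ ((N - 1) / 2)` relative to `γ`, and `(1 - t / N) ^ (N - 1) ≥ 1 / e`.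
-/

open Real

namespace Matrix

variable {n α : Type*} [Fintype n] [DecidableEq n]

theorem det_one_add_vecMulVec_s8 [CommRing α] (u v : n → α) :
    det (1 + vecMulVec u v) = 1 + v ⬝ᵥ u := by
  rw [vecMulVec_eq Unit, det_one_add_replicateCol_mul_replicateRow]

theorem inv_one_add_vecMulVec [Field α] (u v : n → α) (h : 1 + v ⬝ᵥ u ≠ 0) :
    (1 + vecMulVec u v)⁻¹ = 1 - (1 + v ⬝ᵥ u)⁻¹ • vecMulVec u v := by
  refine inv_eq_right_inv ?_
  have hsq : vecMulVec u v * vecMulVec u v = (v ⬝ᵥ u) • vecMulVec u v := by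
    rw [vecMulVec_mul_vecMulVec, vecMulVec_smul]
  have hsum : vecMulVec u v + (v ⬝ᵥ u) • vecMulVec u v = (1 + v ⬝ᵥ u) • vecMulVec u v := by
    rw [add_smul, one_smul]
  rw [mul_sub, mul_one, Matrix.mul_smul, add_mul, one_mul, hsq, hsum, smul_smul,
    inv_mul_cancel₀ h, one_smul, add_sub_cancel_right]

end Matrix

theorem Dreal_eq_of_smul_mul_eq_vecMulVec {N : ℕ} {σw : ℝ} {W Q : Matrix (Fin N) (Fin N) ℝ}
    {u v : Fin N → ℝ} (h : (σw ^ 2)⁻¹ • (W * Q) = vecMulVec u v) (hvu : 1 + v ⬝ᵥ u ≠ 0) :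
    Dreal σw W Q = log (1 + v ⬝ᵥ u) - v ⬝ᵥ u / (1 + v ⬝ᵥ u) := by
  rw [Dreal, h, det_one_add_vecMulVec_s8, inv_one_add_vecMulVec u v hvu, trace_sub, trace_one,
    trace_smul, trace_vecMulVec, Fintype.card_fin, dotProduct_comm u v, smul_eq_mul]
  field_simp
  ring

theorem log_one_add_sub_div_le_sq {x : ℝ} (hx : 0 ≤ x) : log (1 + x) - x / (1 + x) ≤ x ^ 2 := by
  have hlog : log (1 + x) ≤ x := by linarith [log_le_sub_one_of_pos (by linarith : 0 < 1 + x)]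
  have hdiv : x - x / (1 + x) ≤ x ^ 2 := by
    rw [show x - x / (1 + x) = x ^ 2 / (1 + x) by field_simp; ring]
    exact div_le_self (sq_nonneg x) (by linarith)
  linarith

theorem Dreal_smul_vecMulVec_le_sq {N : ℕ} (σw lw P : ℝ) (hlP : 0 ≤ lw * P) (u b : Fin N → ℝ) :
    Dreal σw (lw • vecMulVec u u) (P • vecMulVec b b)
      ≤ (lw * P / σw ^ 2 * (u ⬝ᵥ b) ^ 2) ^ 2 := by
  set x := lw * P / σw ^ 2 * (u ⬝ᵥ b) ^ 2
  have hprod : (σw ^ 2)⁻¹ • (lw • vecMulVec u u * P • vecMulVec b b)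
      = vecMulVec ((lw * P / σw ^ 2 * (u ⬝ᵥ b)) • u) b := by
    rw [smul_mul_smul_comm, vecMulVec_mul_vecMulVec, vecMulVec_smul, smul_vecMulVec,
      smul_smul, smul_smul]
    congr 2
    ring
  have hx : b ⬝ᵥ (lw * P / σw ^ 2 * (u ⬝ᵥ b)) • u = x := by
    rw [dotProduct_smul, smul_eq_mul, dotProduct_comm b u]; ring
  have hx0 : 0 ≤ x := by positivity
  rw [Dreal_eq_of_smul_mul_eq_vecMulVec hprod (by rw [hx]; positivity), hx]
  exact log_one_add_sub_div_le_sq hx0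

theorem mul_Dreal_le_of_sq_dotProduct_le {N n : ℕ} (hn : 0 < n) {σw lw δ P : ℝ} (hσ : 0 < σw)
    (hl : 0 < lw) (hP : 0 < P) {u b : Fin N → ℝ}
    (h : (u ⬝ᵥ b) ^ 2 ≤ √2 * σw ^ 2 * δ / (√n * lw * P)) :
    n * Dreal σw (lw • vecMulVec u u) (P • vecMulVec b b) ≤ 2 * δ ^ 2 := by
  have hn' : (0 : ℝ) < n := by exact_mod_cast hn
  have hx : lw * P / σw ^ 2 * (u ⬝ᵥ b) ^ 2 ≤ √2 * δ / √n :=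
    calc lw * P / σw ^ 2 * (u ⬝ᵥ b) ^ 2
        ≤ lw * P / σw ^ 2 * (√2 * σw ^ 2 * δ / (√n * lw * P)) := by gcongr
      _ = √2 * δ / √n := by field_simp
  calc n * Dreal σw (lw • vecMulVec u u) (P • vecMulVec b b)
      ≤ n * (lw * P / σw ^ 2 * (u ⬝ᵥ b) ^ 2) ^ 2 := by
        gcongr
        exact Dreal_smul_vecMulVec_le_sq σw lw P (by positivity) u b
    _ ≤ n * (√2 * δ / √n) ^ 2 := by gcongr
    _ = 2 * δ ^ 2 := by
        rw [div_pow, mul_pow, sq_sqrt zero_le_two, sq_sqrt hn'.le]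
        field_simp

section DoubleCone

variable {E : Type*} [NormedAddCommGroup E] [InnerProductSpace ℝ E]

/-- The normalisation by `‖v‖² ‖u‖²` makes the cone invariant under scaling of `v` and symmetric
in `u` and `v`, which is what the Fubini argument needs. -/
def doubleCone (v : E) (t : ℝ) : Set E := {u | t * (‖v‖ ^ 2 * ‖u‖ ^ 2) < ⟪v, u⟫_ℝ ^ 2}

theorem mem_doubleCone_comm {u v : E} {t : ℝ} : u ∈ doubleCone v t ↔ v ∈ doubleCone u t := by
  simp only [doubleCone, Set.mem_ofPred_eq, mul_comm (‖v‖ ^ 2), real_inner_comm u v]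

theorem doubleCone_smul {c : ℝ} (hc : c ≠ 0) (v : E) (t : ℝ) :
    doubleCone (c • v) t = doubleCone v t := by
  ext u
  simp only [doubleCone, Set.mem_ofPred_eq, norm_smul, real_inner_smul_left, mul_pow,
    Real.norm_eq_abs, sq_abs]
  rw [show t * (c ^ 2 * ‖v‖ ^ 2 * ‖u‖ ^ 2) = c ^ 2 * (t * (‖v‖ ^ 2 * ‖u‖ ^ 2)) by ring,
    mul_lt_mul_iff_right₀ (by positivity)]

theorem LinearIsometryEquiv.preimage_doubleCone (f : E ≃ₗᵢ[ℝ] E) (v : E) (t : ℝ) :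
    f ⁻¹' doubleCone (f v) t = doubleCone v t := by
  ext u
  simp only [doubleCone, Set.mem_preimage, Set.mem_ofPred_eq, f.norm_map, f.inner_map_map]

theorem exists_linearIsometryEquiv_apply_eq {v w : E} (h : ‖v‖ = ‖w‖) :
    ∃ f : E ≃ₗᵢ[ℝ] E, f v = w :=
  ⟨Submodule.reflection (ℝ ∙ (v - w))ᗮ, Submodule.reflection_sub h⟩

variable [MeasurableSpace E] [BorelSpace E] [SecondCountableTopology E]

theorem measurableSet_setOf_mem_doubleCone (t : ℝ) :
    MeasurableSet {p : E × E | p.2 ∈ doubleCone p.1 t} :=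
  measurableSet_lt (f := fun p : E × E => t * (‖p.1‖ ^ 2 * ‖p.2‖ ^ 2))
    (g := fun p : E × E => ⟪p.1, p.2⟫_ℝ ^ 2) (by fun_prop) (by fun_prop)

theorem measurableSet_doubleCone (v : E) (t : ℝ) : MeasurableSet (doubleCone v t) :=
  measurable_prodMk_left (measurableSet_setOf_mem_doubleCone t)

theorem measure_doubleCone_eq {ν : Measure E} (hν : ∀ f : E ≃ₗᵢ[ℝ] E, ν.map f = ν)
    {v w : E} (hv : v ≠ 0) (hw : w ≠ 0) (t : ℝ) :
    ν (doubleCone v t) = ν (doubleCone w t) := by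
  have hnorm : ‖(‖w‖ / ‖v‖) • v‖ = ‖w‖ := by
    rw [norm_smul, Real.norm_eq_abs, abs_div, abs_norm, abs_norm,
      div_mul_cancel₀ _ (norm_ne_zero_iff.mpr hv)]
  obtain ⟨f, hf⟩ := exists_linearIsometryEquiv_apply_eq hnorm
  conv_rhs => rw [← hν f]
  rw [Measure.map_apply f.continuous.measurable (measurableSet_doubleCone w t), ← hf,
    f.preimage_doubleCone, doubleCone_smul (by positivity)]

theorem measure_doubleCone_mul_measure_univ {μ ν : Measure E} [SFinite μ] [SFinite ν]
    (hμ : ∀ f : E ≃ₗᵢ[ℝ] E, μ.map f = μ) (hν : ∀ f : E ≃ₗᵢ[ℝ] E, ν.map f = ν)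
    (hμ0 : μ {0} = 0) (hν0 : ν {0} = 0) {v w : E} (hv : v ≠ 0) (hw : w ≠ 0) (t : ℝ) :
    μ (doubleCone v t) * ν Set.univ = ν (doubleCone w t) * μ Set.univ := by
  have hS := measurableSet_setOf_mem_doubleCone (E := E) t
  calc μ (doubleCone v t) * ν Set.univ
      = ∫⁻ g, μ ((·, g) ⁻¹' {p : E × E | p.2 ∈ doubleCone p.1 t}) ∂ν := by
        rw [← lintegral_const]
        refine lintegral_congr_ae ?_
        filter_upwards [compl_mem_ae_iff.mpr hν0] with g hg
        simp only [Set.preimage_ofPred_eq, mem_doubleCone_comm (u := g)]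
        exact measure_doubleCone_eq hμ hv hg t
    _ = ∫⁻ u, ν (Prod.mk u ⁻¹' {p : E × E | p.2 ∈ doubleCone p.1 t}) ∂μ := by
        rw [← Measure.prod_apply_symm hS, Measure.prod_apply hS]
    _ = ν (doubleCone w t) * μ Set.univ := by
        rw [← lintegral_const]
        refine lintegral_congr_ae ?_
        filter_upwards [compl_mem_ae_iff.mpr hμ0] with u hu
        exact measure_doubleCone_eq hν hu hw t

theorem one_sub_le_measure_setOf_inner_sq_le {μ : Measure E} [IsProbabilityMeasure μ]
    (hμ : ∀ᵐ u ∂μ, ‖u‖ = 1) {v : E} (hv : ‖v‖ = 1) (t : ℝ) :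
    1 - (μ (doubleCone v t)).toReal ≤ (μ {u | ⟪v, u⟫_ℝ ^ 2 ≤ t}).toReal := by
  have hsub : {u | ⟪v, u⟫_ℝ ^ 2 ≤ t}ᶜ ≤ᵐ[μ] doubleCone v t := by
    filter_upwards [hμ] with u hu (hmem : u ∈ {u | ⟪v, u⟫_ℝ ^ 2 ≤ t}ᶜ)
    change u ∈ doubleCone v t
    simpa [doubleCone, hu, hv] using hmem
  have hmeas : MeasurableSet {u | ⟪v, u⟫_ℝ ^ 2 ≤ t} := measurableSet_le (by fun_prop) (by fun_prop)
  have hle : μ.real {u | ⟪v, u⟫_ℝ ^ 2 ≤ t}ᶜ ≤ μ.real (doubleCone v t) :=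
    ENNReal.toReal_mono (measure_ne_top _ _) (measure_mono_ae hsub)
  change 1 - μ.real _ ≤ μ.real _
  linarith [probReal_compl_eq_one_sub (μ := μ) hmeas]

end DoubleCone

section GaussianVolume

variable {ι : Type*} [Fintype ι]

theorem lintegral_exp_neg_sum_mul_sq (b : ι → ℝ) (hb : ∀ i, 0 < b i) :
    ∫⁻ x : EuclideanSpace ℝ ι, ENNReal.ofReal (exp (-∑ i, b i * x i ^ 2))
      = ENNReal.ofReal (∏ i, √(π / b i)) := by
  have hfactor : ∀ y : ι → ℝ, exp (-∑ i, b i * y i ^ 2) = ∏ i, exp (-b i * y i ^ 2) := by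
    intro y
    rw [← exp_sum, ← Finset.sum_neg_distrib]
    simp only [neg_mul]
  have hint : Integrable (fun y : ι → ℝ => ∏ i, exp (-b i * y i ^ 2)) :=
    Integrable.fintype_prod fun i => integrable_exp_neg_mul_sq (hb i)
  calc ∫⁻ x : EuclideanSpace ℝ ι, ENNReal.ofReal (exp (-∑ i, b i * x i ^ 2))
      = ∫⁻ y : ι → ℝ, ENNReal.ofReal (∏ i, exp (-b i * y i ^ 2)) := by
        simp_rw [← hfactor]
        exact (PiLp.volume_preserving_ofLp ι).lintegral_comp
          (f := fun y : ι → ℝ => ENNReal.ofReal (exp (-∑ i, b i * y i ^ 2)))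
          (Measurable.ennreal_ofReal (by fun_prop))
    _ = ENNReal.ofReal (∫ y : ι → ℝ, ∏ i, exp (-b i * y i ^ 2)) :=
        (ofReal_integral_eq_lintegral_ofReal hint
          (ae_of_all _ fun y => Finset.prod_nonneg fun i _ => (exp_pos _).le)).symm
    _ = ENNReal.ofReal (∏ i, √(π / b i)) := by
        congr 1
        refine (integral_fintype_prod_eq_prod fun i (x : ℝ) => exp (-b i * x ^ 2)).trans ?_
        simp_rw [integral_gaussian]

variable (ι) in
noncomputable def gaussianVolume : Measure (EuclideanSpace ℝ ι) :=
  volume.withDensity fun x => ENNReal.ofReal (exp (-(‖x‖ ^ 2) / 2))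

theorem gaussianVolume_univ :
    gaussianVolume ι Set.univ = ENNReal.ofReal (√(2 * π) ^ Fintype.card ι) := by
  have h := lintegral_exp_neg_sum_mul_sq (ι := ι) (fun _ => 1 / 2) fun _ => one_half_pos
  simp only [← Finset.mul_sum, ← EuclideanSpace.real_norm_sq_eq, div_div_eq_mul_div,
    Finset.prod_const, Finset.card_univ] at h
  rw [gaussianVolume, withDensity_apply _ MeasurableSet.univ, Measure.restrict_univ]
  convert h using 4
  all_goals ring_nf

instance : IsFiniteMeasure (gaussianVolume ι) :=
  ⟨by rw [gaussianVolume_univ]; exact ENNReal.ofReal_lt_top⟩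

theorem gaussianVolume_singleton_zero [Nonempty ι] : gaussianVolume ι {0} = 0 :=
  withDensity_absolutelyContinuous _ _ (measure_singleton 0)

theorem map_gaussianVolume (f : EuclideanSpace ℝ ι ≃ₗᵢ[ℝ] EuclideanSpace ℝ ι) :
    (gaussianVolume ι).map f = gaussianVolume ι := by
  ext s hs
  rw [Measure.map_apply f.continuous.measurable hs, gaussianVolume,
    withDensity_apply _ (f.continuous.measurable hs), withDensity_apply _ hs]
  calc ∫⁻ x in f ⁻¹' s, ENNReal.ofReal (exp (-(‖x‖ ^ 2) / 2))
      = ∫⁻ x in f ⁻¹' s, ENNReal.ofReal (exp (-(‖f x‖ ^ 2) / 2)) := by simp only [f.norm_map]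
    _ = _ := f.measurePreserving.setLIntegral_comp_preimage_emb
      f.toHomeomorph.toMeasurableEquiv.measurableEmbedding
      (fun y => ENNReal.ofReal (exp (-(‖y‖ ^ 2) / 2))) s

theorem gaussianVolume_le_of_forall_mem {B : Set (EuclideanSpace ℝ ι)} (b : ι → ℝ)
    (hb : ∀ i, 0 < b i) (hB : ∀ x ∈ B, ∑ i, b i * x i ^ 2 ≤ ‖x‖ ^ 2 / 2) :
    gaussianVolume ι B ≤ ENNReal.ofReal (∏ i, √(π / b i)) := by
  rw [gaussianVolume, withDensity_apply', ← lintegral_exp_neg_sum_mul_sq b hb]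
  refine (setLIntegral_mono (by fun_prop) fun x hx => ?_).trans (setLIntegral_le_lintegral _ _)
  gcongr
  linarith [hB x hx]

end GaussianVolume

theorem one_le_four_mul_one_sub_div_pow (N : ℕ) {t : ℝ} (ht1 : t ≤ 1) :
    1 ≤ 4 * (1 - t / N) ^ (N - 1) := by
  obtain hN | ⟨k, rfl⟩ : N ≤ 1 ∨ ∃ k, N = k + 1 + 1 :=
    (le_or_gt N 1).imp id fun h => ⟨N - 2, by omega⟩
  · rw [Nat.sub_eq_zero_of_le hN]; norm_num
  have hbase : (1 + ((k + 1 : ℕ) : ℝ)⁻¹)⁻¹ ≤ 1 - t / ((k + 1 + 1 : ℕ) : ℝ) := by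
    push_cast
    rw [show (1 + ((k : ℝ) + 1)⁻¹)⁻¹ = 1 - 1 / ((k : ℝ) + 1 + 1) by field_simp; ring]
    gcongr
  calc (1 : ℝ) ≤ 4 * (exp 1)⁻¹ := by
        rw [← div_eq_mul_inv, le_div_iff₀ (exp_pos 1)]; linarith [exp_one_lt_d9]
    _ ≤ 4 * ((1 + ((k + 1 : ℕ) : ℝ)⁻¹) ^ (k + 1))⁻¹ := by
        gcongr; exact one_add_inv_pow_le_exp
    _ ≤ 4 * (1 - t / ((k + 1 + 1 : ℕ) : ℝ)) ^ (k + 1 + 1 - 1) := by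
        rw [← inv_pow, Nat.add_sub_cancel]; gcongr

theorem sqrt_div_one_sub_div_pow_le {N : ℕ} (hN : 1 ≤ N) {t : ℝ} (ht0 : 0 ≤ t) (ht1 : t < 1) :
    √((1 - t) / (1 - t / N)) ^ (N - 1) ≤ 2 * (1 - t) ^ (((N : ℝ) - 2) / 2) := by
  have ha : 0 < 1 - t := by linarith
  have hb : 0 < 1 - t / N := by
    linarith [div_le_self ht0 (by exact_mod_cast hN : (1 : ℝ) ≤ N)]
  have hnum : √(1 - t) ^ (N - 1) ≤ (1 - t) ^ (((N : ℝ) - 2) / 2) := by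
    rw [sqrt_eq_rpow, ← rpow_natCast, ← rpow_mul ha.le, Nat.cast_sub hN]
    exact rpow_le_rpow_of_exponent_ge ha (by linarith) (by linarith)
  have hden : 1 ≤ 2 * √(1 - t / N) ^ (N - 1) := by
    have hsq : (2 * √(1 - t / N) ^ (N - 1)) ^ 2 = 4 * (1 - t / N) ^ (N - 1) := by
      rw [mul_pow, ← pow_mul, mul_comm (N - 1), pow_mul, sq_sqrt hb.le]; norm_num
    nlinarith [one_le_four_mul_one_sub_div_pow N ht1.le,
      pow_nonneg (sqrt_nonneg (1 - t / N)) (N - 1)]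
  rw [sqrt_div' _ hb.le, div_pow, div_le_iff₀ (pow_pos (sqrt_pos.mpr hb) _)]
  calc √(1 - t) ^ (N - 1) ≤ (1 - t) ^ (((N : ℝ) - 2) / 2) * 1 := by rw [mul_one]; exact hnum
    _ ≤ (1 - t) ^ (((N : ℝ) - 2) / 2) * (2 * √(1 - t / N) ^ (N - 1)) := by gcongr
    _ = _ := by ring

theorem mem_doubleCone_single_iff {ι : Type*} [Fintype ι] [DecidableEq ι] (i₀ : ι) (t : ℝ)
    (x : EuclideanSpace ℝ ι) :
    x ∈ doubleCone (EuclideanSpace.single i₀ 1) t ↔ t * ‖x‖ ^ 2 < x i₀ ^ 2 := by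
  simp [doubleCone, EuclideanSpace.inner_single_left]

/-- `hbal` makes the tilted quadratic form `∑ i, b i * x i ^ 2` agree with `‖x‖² / 2` on the
boundary of the cone, and `α ≤ β` makes it smaller inside. -/
theorem gaussianVolume_doubleCone_single_le_of_weights {ι : Type*} [Fintype ι] [DecidableEq ι]
    (i₀ : ι) {t α β : ℝ} (hα : 0 < α) (hαβ : α ≤ β)
    (hbal : α * t + β * (1 - t) = 1 / 2) :
    gaussianVolume ι (doubleCone (EuclideanSpace.single i₀ 1) t)
      ≤ ENNReal.ofReal (√(π / α) * √(π / β) ^ (Fintype.card ι - 1)) := by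
  obtain ⟨b, hb_i₀, hb_ne⟩ : ∃ b : ι → ℝ, b i₀ = α ∧ ∀ i ≠ i₀, b i = β :=
    ⟨Function.update (fun _ => β) i₀ α, Function.update_self .., fun i hi =>
      Function.update_of_ne hi ..⟩
  have hb : ∀ i, 0 < b i := by
    intro i
    rcases eq_or_ne i i₀ with rfl | hi
    · rwa [hb_i₀]
    · rw [hb_ne i hi]; exact hα.trans_le hαβ
  have hdom : ∀ x ∈ doubleCone (EuclideanSpace.single i₀ 1) t,
      ∑ i, b i * x i ^ 2 ≤ ‖x‖ ^ 2 / 2 := by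
    intro x hx
    rw [mem_doubleCone_single_iff] at hx
    have hsum : ∑ i, b i * x i ^ 2 = α * x i₀ ^ 2 + β * (‖x‖ ^ 2 - x i₀ ^ 2) := by
      rw [EuclideanSpace.real_norm_sq_eq, Fintype.sum_eq_add_sum_compl i₀,
        Fintype.sum_eq_add_sum_compl i₀, hb_i₀, add_sub_cancel_left, Finset.mul_sum]
      congr 1
      exact Finset.sum_congr rfl fun i hi => by rw [hb_ne i (by simpa using hi)]
    rw [hsum]
    nlinarith
  refine (gaussianVolume_le_of_forall_mem b hb hdom).trans_eq ?_
  rw [Fintype.prod_eq_mul_prod_compl i₀, hb_i₀,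
    Finset.prod_congr rfl fun i hi => by rw [hb_ne i (by simpa using hi)], Finset.prod_const,
    Finset.card_compl, Finset.card_singleton]

theorem gaussianVolume_doubleCone_single_le {ι : Type*} [Fintype ι] [DecidableEq ι] (i₀ : ι)
    {t : ℝ} (ht0 : 0 ≤ t) (ht1 : t < 1) :
    gaussianVolume ι (doubleCone (EuclideanSpace.single i₀ 1) t)
      ≤ ENNReal.ofReal (2 * √(Fintype.card ι) * (1 - t) ^ (((Fintype.card ι : ℝ) - 2) / 2))
        * gaussianVolume ι Set.univ := by
  set N : ℕ := Fintype.card ι with hN_def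
  have hN : 1 ≤ N := Fintype.card_pos_iff.mpr ⟨i₀⟩
  have hN' : (1 : ℝ) ≤ N := by exact_mod_cast hN
  have h1t : 0 < 1 - t := by linarith
  have h1tN : 0 < 1 - t / N := by linarith [div_le_self ht0 hN']
  have hbound := gaussianVolume_doubleCone_single_le_of_weights i₀ (t := t) (α := 1 / (2 * N))
    (β := (1 - t / N) / (2 * (1 - t))) (by positivity)
    (by
      rw [div_le_div_iff₀ (by positivity) (by positivity),
        show (1 - t / N) * (2 * N) = 2 * N - 2 * t by field_simp]
      linarith)
    (by field_simp; ring)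
  rw [← hN_def, show π / (1 / (2 * N)) = 2 * π * N by field_simp,
    show π / ((1 - t / N) / (2 * (1 - t))) = 2 * π * ((1 - t) / (1 - t / N)) by field_simp]
    at hbound
  refine hbound.trans ?_
  rw [gaussianVolume_univ, ← hN_def, ← ENNReal.ofReal_mul (by positivity)]
  refine ENNReal.ofReal_le_ofReal ?_
  calc √(2 * π * N) * √(2 * π * ((1 - t) / (1 - t / N))) ^ (N - 1)
      = √(2 * π) ^ N * (√N * √((1 - t) / (1 - t / N)) ^ (N - 1)) := by
        rw [sqrt_mul (by positivity : (0 : ℝ) ≤ 2 * π) N,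
          sqrt_mul (by positivity : (0 : ℝ) ≤ 2 * π) ((1 - t) / (1 - t / N)), mul_pow,
          ← pow_sub_one_mul (by omega : N ≠ 0) (√(2 * π))]
        ring
    _ ≤ √(2 * π) ^ N * (√N * (2 * (1 - t) ^ (((N : ℝ) - 2) / 2))) := by
        gcongr
        exact sqrt_div_one_sub_div_pow_le hN ht0 ht1
    _ = _ := by ring

theorem measure_doubleCone_le {ι : Type*} [Fintype ι] [Nonempty ι]
    {μ : Measure (EuclideanSpace ℝ ι)} [IsProbabilityMeasure μ]
    (hμ : ∀ f : EuclideanSpace ℝ ι ≃ₗᵢ[ℝ] EuclideanSpace ℝ ι, μ.map f = μ) (hμ0 : μ {0} = 0)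
    {v : EuclideanSpace ℝ ι} (hv : v ≠ 0) {t : ℝ} (ht0 : 0 ≤ t) (ht1 : t < 1) :
    μ (doubleCone v t)
      ≤ ENNReal.ofReal (2 * √(Fintype.card ι) * (1 - t) ^ (((Fintype.card ι : ℝ) - 2) / 2)) := by
  classical
  obtain ⟨i₀⟩ := ‹Nonempty ι›
  have hγ : gaussianVolume ι Set.univ ≠ 0 := by
    rw [gaussianVolume_univ]; exact (ENNReal.ofReal_pos.mpr (by positivity)).ne'
  rw [← ENNReal.mul_le_mul_iff_left hγ (measure_ne_top _ _),
    measure_doubleCone_mul_measure_univ hμ map_gaussianVolume hμ0 gaussianVolume_singleton_zero hv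
      (w := EuclideanSpace.single i₀ 1) (by simp) t, measure_univ, mul_one]
  exact gaussianVolume_doubleCone_single_le i₀ ht0 ht1

/-- **Probability of achieving full covert capacity in the massive MIMO limit
(Theorem 8, eq. (70), real-sphere form).**  There is a universal constant `K > 0` such that,
with `t = √2·σ_w²·δ/(√n·λ_w·P) ∈ (0,1)`, `u_b` a fixed unit vector, and `u_w` uniform on the
unit sphere of `ℝ^{N_a}`, the event `{u_w : ⟨u_b, u_w⟩² ≤ t}` — on which the full-power
covariance `Q₀ = P u_b u_bᵀ` satisfies the covertness constraint
`n·D(λ_w u_w u_wᵀ, Q₀) ≤ 2δ²` — has probability at least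
`1 − K·√N_a·(1 − t)^{(N_a−2)/2}`. -/
theorem massive_mimo_full_capacity_probability :
    ∃ K : ℝ, 0 < K ∧
      ∀ (Na n : ℕ), 2 ≤ Na → 1 ≤ n →
      ∀ σw lw δ P t : ℝ, 0 < σw → 0 < lw → 0 < δ → 0 < P →
        t = Real.sqrt 2 * σw ^ 2 * δ / (Real.sqrt n * lw * P) → 0 < t → t < 1 →
      ∀ ub : EuclideanSpace ℝ (Fin Na), ‖ub‖ = 1 →
      ∀ μ : Measure (EuclideanSpace ℝ (Fin Na)), IsProbabilityMeasure μ →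
        μ (Metric.sphere (0 : EuclideanSpace ℝ (Fin Na)) 1) = 1 →
        (∀ f : EuclideanSpace ℝ (Fin Na) ≃ₗᵢ[ℝ] EuclideanSpace ℝ (Fin Na),
          Measure.map f μ = μ) →
        (∀ uw : EuclideanSpace ℝ (Fin Na), ‖uw‖ = 1 → ⟪ub, uw⟫_ℝ ^ 2 ≤ t →
          (n : ℝ) * Dreal σw (lw • vecMulVec (uw : Fin Na → ℝ) uw)
              (P • vecMulVec (ub : Fin Na → ℝ) ub) ≤ 2 * δ ^ 2) ∧
        1 - K * Real.sqrt Na * (1 - t) ^ (((Na : ℝ) - 2) / 2)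
          ≤ (μ {uw : EuclideanSpace ℝ (Fin Na) | ⟪ub, uw⟫_ℝ ^ 2 ≤ t}).toReal := by
  refine ⟨2, two_pos, fun Na n hNa hn σw lw δ P t hσ hl _ hP ht ht0 ht1 ub hub μ hμ hsph hrot =>
    ⟨fun uw _ huw => mul_Dreal_le_of_sq_dotProduct_le hn hσ hl hP ?_, ?_⟩⟩
  · rwa [EuclideanSpace.inner_eq_star_dotProduct, star_trivial, ht] at huw
  have hae : ∀ᵐ u ∂μ, ‖u‖ = 1 := by
    have hnull := (prob_compl_eq_zero_iff Metric.isClosed_sphere.measurableSet).mpr hsph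
    filter_upwards [mem_ae_iff.mpr hnull] with u hu
    simpa using hu
  have : Nonempty (Fin Na) := ⟨⟨0, by omega⟩⟩
  have hcap := measure_doubleCone_le hrot (measure_mono_null (by simp) (ae_iff.mp hae))
    (norm_ne_zero_iff.mp (hub ▸ one_ne_zero)) ht0.le ht1
  rw [Fintype.card_fin] at hcap
  calc 1 - 2 * √Na * (1 - t) ^ (((Na : ℝ) - 2) / 2)
      ≤ 1 - (μ (doubleCone ub t)).toReal := by
        gcongr
        exact ENNReal.toReal_le_of_le_ofReal (by positivity) hcap
    _ ≤ _ := one_sub_le_measure_setOf_inner_sq_le hae hub t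
end

section
/- Monotonicity of the detection functional in Willie's Gram matrix (Appendix D): Let N_a ≥ 1, σ_w > 0, and let Q be an N_a×N_a complex Hermitian positive semidefinite matrix. If W₁ and W₂ are N_a×N_a complex Hermitian positive semidefinite matrices such that W₁ − W₂ is positive semidefinite, then D(W₁, Q) ≥ D(W₂, Q). -/
/-!
Write `S = Q^{1/2}` and `f M = log det M + tr M⁻¹`. Since `det (1 + AB) = det (1 + BA)` and
`tr (1 + AB)⁻¹ = tr (1 + BA)⁻¹`, we get `D(W, Q) = f (1 + S (σ_w⁻² W) S) - N_a`, and
`W ↦ 1 + S (σ_w⁻² W) S` is monotone in the Loewner order with values `≥ 1`. So it suffices that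
`f` is monotone on `{M ≥ 1}`. For `1 ≤ M ≤ N` put `P = M^{1/2}` and `X = P⁻¹ N P⁻¹ ≥ 1`. Then
`log det N = log det M + log det X`, where `log det X ≥ tr (1 - X⁻¹)` eigenvalue by eigenvalue
from `log μ ≥ 1 - μ⁻¹`, while
`tr N⁻¹ = tr (X⁻¹ M⁻¹) = tr M⁻¹ - tr (1 - X⁻¹) + tr ((1 - X⁻¹)(1 - M⁻¹))`
and the last trace is that of a product of two positive semidefinite matrices.
-/

open Matrix
open scoped ComplexOrder

open scoped MatrixOrder

namespace Matrix

variable {n : Type*} [DecidableEq n]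

theorem PosDef.of_one_le {𝕜 : Type*} [RCLike 𝕜] {M : Matrix n n 𝕜} (h : 1 ≤ M) : M.PosDef := by
  simpa using PosDef.one.add_posSemidef (le_iff.mp h)

variable [Fintype n]

theorem trace_inv_one_add_mul_comm {R : Type*} [CommRing R] (A B : Matrix n n R) :
    (1 + A * B)⁻¹.trace = (1 + B * A)⁻¹.trace := by
  by_cases h : IsUnit (1 + B * A).det
  · set Y := (1 + B * A)⁻¹
    have hY : Y * (1 + B * A) = 1 := nonsing_inv_mul _ h
    have hAB : (1 + A * B)⁻¹ = 1 - A * Y * B := by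
      refine inv_eq_right_inv ?_
      calc (1 + A * B) * (1 - A * Y * B) = 1 + A * B - A * ((1 + B * A) * Y) * B := by
            noncomm_ring
        _ = 1 := by rw [mul_eq_one_comm.mp hY]; noncomm_ring
    have hBA : Y = 1 - Y * (B * A) := by
      rw [eq_sub_iff_add_eq, ← mul_one_add, hY]
    conv_rhs => rw [hBA]
    rw [hAB, trace_sub, trace_sub, trace_mul_cycle, trace_mul_comm (B * A) Y]
  · have h' : ¬IsUnit (1 + A * B).det := by rwa [det_one_add_mul_comm]
    rw [nonsing_inv_apply_not_isUnit _ h, nonsing_inv_apply_not_isUnit _ h']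

section RCLike

variable {𝕜 : Type*} [RCLike 𝕜]

theorem trace_mul_nonneg {A B : Matrix n n 𝕜} (hA : 0 ≤ A) (hB : 0 ≤ B) :
    0 ≤ (A * B).trace := by
  have hS : IsSelfAdjoint (CFC.sqrt A) := .of_nonneg (CFC.sqrt_nonneg A)
  rw [← CFC.sqrt_mul_sqrt_self A hA, Matrix.mul_assoc, trace_mul_comm]
  exact (nonneg_iff_posSemidef.mp (hS.conjugate_nonneg hB)).trace_nonneg

theorem PosDef.log_det_le_trace_sub_card {Y : Matrix n n 𝕜} (hY : Y.PosDef) :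
    Real.log (RCLike.re Y.det) ≤ RCLike.re Y.trace - Fintype.card n := by
  rw [hY.isHermitian.det_eq_prod_eigenvalues, hY.isHermitian.trace_eq_sum_eigenvalues,
    ← RCLike.ofReal_prod, ← RCLike.ofReal_sum, RCLike.ofReal_re, RCLike.ofReal_re,
    Real.log_prod fun i _ => (hY.eigenvalues_pos i).ne', Fintype.card_eq_sum_ones, Nat.cast_sum,
    Nat.cast_one, ← Finset.sum_sub_distrib]
  exact Finset.sum_le_sum fun i _ => Real.log_le_sub_one_of_pos (hY.eigenvalues_pos i)

theorem PosDef.re_det_inv {X : Matrix n n 𝕜} (hX : X.PosDef) :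
    RCLike.re X⁻¹.det = (RCLike.re X.det)⁻¹ := by
  obtain ⟨r, -, hr⟩ := RCLike.pos_iff_exists_ofReal.mp hX.det_pos
  rw [det_nonsing_inv, Ring.inverse_eq_inv', ← hr, ← RCLike.ofReal_inv, RCLike.ofReal_re,
    RCLike.ofReal_re]

theorem PosDef.trace_one_sub_inv_le_log_det {X : Matrix n n 𝕜} (hX : X.PosDef) :
    RCLike.re (1 - X⁻¹).trace ≤ Real.log (RCLike.re X.det) := by
  have h := hX.inv.log_det_le_trace_sub_card
  rw [hX.re_det_inv, Real.log_inv] at h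
  rw [trace_sub, trace_one, map_sub, RCLike.natCast_re]
  linarith

end RCLike

open scoped Matrix.Norms.L2Operator in
theorem inv_le_one_of_one_le {X : Matrix n n ℂ} (h : 1 ≤ X) : X⁻¹ ≤ 1 := by
  lift X to (Matrix n n ℂ)ˣ using (PosDef.of_one_le h).isUnit
  simpa [coe_units_inv] using CStarAlgebra.inv_le_one (Units.val_le_val.mp h)

noncomputable def logDetAddTraceInv (M : Matrix n n ℂ) : ℝ :=
  Real.log M.det.re + M⁻¹.trace.re

theorem logDetAddTraceInv_one_add_mul_comm (A B : Matrix n n ℂ) :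
    logDetAddTraceInv (1 + A * B) = logDetAddTraceInv (1 + B * A) := by
  rw [logDetAddTraceInv, logDetAddTraceInv, det_one_add_mul_comm, trace_inv_one_add_mul_comm]

theorem logDetAddTraceInv_mono {M N : Matrix n n ℂ} (hM : 1 ≤ M) (hMN : M ≤ N) :
    logDetAddTraceInv M ≤ logDetAddTraceInv N := by
  obtain ⟨P, hP0, hPP⟩ : ∃ P, 0 ≤ P ∧ P * P = M :=
    ⟨CFC.sqrt M, CFC.sqrt_nonneg M, CFC.sqrt_mul_sqrt_self M (zero_le_one.trans hM)⟩
  have hP : IsUnit P.det := isUnit_of_mul_isUnit_left <| by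
    rw [← det_mul, hPP, ← isUnit_iff_isUnit_det]; exact (PosDef.of_one_le hM).isUnit
  have hPinv : IsSelfAdjoint P⁻¹ := IsHermitian.inv (IsSelfAdjoint.of_nonneg hP0)
  set X := P⁻¹ * N * P⁻¹
  have hPMP : P⁻¹ * M * P⁻¹ = 1 := by
    rw [← hPP, Matrix.mul_assoc, Matrix.mul_assoc, mul_nonsing_inv _ hP, Matrix.mul_one,
      nonsing_inv_mul _ hP]
  have hX : 1 ≤ X := hPMP ▸ hPinv.conjugate_le_conjugate hMN
  have hN : N = P * X * P := by
    simp only [X, ← Matrix.mul_assoc, mul_nonsing_inv _ hP, Matrix.one_mul]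
    rw [Matrix.mul_assoc, nonsing_inv_mul _ hP, Matrix.mul_one]
  clear_value X
  have hdet : N.det = M.det * X.det := by
    rw [hN, det_mul, det_mul, ← hPP, det_mul]; ring
  have htr : N⁻¹.trace = M⁻¹.trace - (1 - X⁻¹).trace + ((1 - X⁻¹) * (1 - M⁻¹)).trace := by
    have h : N⁻¹.trace = (X⁻¹ * M⁻¹).trace := by
      rw [hN, ← hPP, Matrix.mul_inv_rev, Matrix.mul_inv_rev, Matrix.mul_inv_rev,
        trace_mul_comm, Matrix.mul_assoc]
    rw [h, ← trace_sub, ← trace_add]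
    congr 1
    noncomm_ring
  have hcross : 0 ≤ ((1 - X⁻¹) * (1 - M⁻¹)).trace :=
    trace_mul_nonneg (sub_nonneg.mpr (inv_le_one_of_one_le hX))
      (sub_nonneg.mpr (inv_le_one_of_one_le hM))
  have hlog : Real.log N.det.re = Real.log M.det.re + Real.log X.det.re := by
    obtain ⟨a, ha, hMa⟩ := RCLike.pos_iff_exists_ofReal.mp (PosDef.of_one_le hM).det_pos
    obtain ⟨b, hb, hXb⟩ := RCLike.pos_iff_exists_ofReal.mp (PosDef.of_one_le hX).det_pos
    rw [hdet, ← hMa, ← hXb, ← RCLike.ofReal_mul]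
    exact Real.log_mul ha.ne' hb.ne'
  have hXlog := (PosDef.of_one_le hX).trace_one_sub_inv_le_log_det
  have hcross_re := (RCLike.nonneg_iff.mp hcross).1
  rw [logDetAddTraceInv, logDetAddTraceInv, hlog, htr, Complex.add_re, Complex.sub_re]
  simp only [RCLike.re_to_complex] at hXlog hcross_re
  linarith

end Matrix

theorem Dfun_eq_logDetAddTraceInv {Na : ℕ} (σw : ℝ) (W : Matrix (Fin Na) (Fin Na) ℂ)
    {Q : Matrix (Fin Na) (Fin Na) ℂ} (hQ : Q.PosSemidef) :
    Dfun σw W Q =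
      logDetAddTraceInv (1 + CFC.sqrt Q * ((σw ^ 2)⁻¹ • W) * CFC.sqrt Q) - Na := by
  have hQ' : (σw ^ 2)⁻¹ • (W * Q) = ((σw ^ 2)⁻¹ • W * CFC.sqrt Q) * CFC.sqrt Q := by
    rw [Matrix.mul_assoc, CFC.sqrt_mul_sqrt_self Q hQ.nonneg, Matrix.smul_mul]
  change logDetAddTraceInv (1 + (σw ^ 2)⁻¹ • (W * Q)) - Na = _
  rw [hQ', logDetAddTraceInv_one_add_mul_comm, Matrix.mul_assoc]

theorem detection_functional_monotone_general (Na : ℕ) (σw : ℝ)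
    (Q : Matrix (Fin Na) (Fin Na) ℂ) (hQ : Q.PosSemidef)
    (W₁ W₂ : Matrix (Fin Na) (Fin Na) ℂ) (hW₂ : W₂.PosSemidef)
    (hle : (W₁ - W₂).PosSemidef) :
    Dfun σw W₂ Q ≤ Dfun σw W₁ Q := by
  have hc : (0 : ℝ) ≤ (σw ^ 2)⁻¹ := by positivity
  have hS : IsSelfAdjoint (CFC.sqrt Q) := .of_nonneg (CFC.sqrt_nonneg Q)
  have hW₂c : 0 ≤ (σw ^ 2)⁻¹ • W₂ := (hW₂.smul hc).nonneg
  have hWc : (σw ^ 2)⁻¹ • W₂ ≤ (σw ^ 2)⁻¹ • W₁ := by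
    rw [le_iff, ← smul_sub]; exact hle.smul hc
  rw [Dfun_eq_logDetAddTraceInv σw W₂ hQ, Dfun_eq_logDetAddTraceInv σw W₁ hQ]
  gcongr ?_ - _
  apply logDetAddTraceInv_mono
  · exact le_add_of_nonneg_right (hS.conjugate_nonneg hW₂c)
  · exact add_le_add_right (hS.conjugate_le_conjugate hWc) 1

/-- **Monotonicity of the detection functional in Willie's Gram matrix (Appendix D).**
If `W₁ − W₂` is positive semidefinite, then `D(W₁, Q) ≥ D(W₂, Q)`. -/
theorem detection_functional_monotone (Na : ℕ) (hNa : 1 ≤ Na) (σw : ℝ) (hσw : 0 < σw)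
    (Q : Matrix (Fin Na) (Fin Na) ℂ) (hQ : Q.PosSemidef)
    (W₁ W₂ : Matrix (Fin Na) (Fin Na) ℂ) (hW₁ : W₁.PosSemidef) (hW₂ : W₂.PosSemidef)
    (hle : (W₁ - W₂).PosSemidef) :
    Dfun σw W₂ Q ≤ Dfun σw W₁ Q :=
  detection_functional_monotone_general Na σw Q hQ W₁ W₂ hW₂ hle
end
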